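/- arXiv:2403.16879 — 3 statements merged into one kernel-verified Lean document; each statement's English description precedes it below -/
import Mathlib

section
/- Let R⁽¹⁾,…,R⁽ⁿ⁾ ∈ SO(3), n ≥ 3, with rows r₁⁽ⁱ⁾, r₂⁽ⁱ⁾, r₃⁽ⁱ⁾. Define the 2n×n block matrix A with 2×1 blocks a_{ij} = (⟨r₁⁽ⁱ⁾, r₃⁽ⁱ⁾ × r₃⁽ʲ⁾⟩, ⟨r₂⁽ⁱ⁾, r₃⁽ⁱ⁾ × r₃⁽ʲ⁾⟩)ᵀ for i ≠ j and a_{ii} = 0. Then A factors as A = B Cᵀ where B ∈ ℝ^{2n×3} has i-th row pair (-r₂⁽ⁱ⁾ᵀ ; r₁⁽ⁱ⁾ᵀ) and C ∈ ℝ^{n×3} has i-th row r₃⁽ⁱ⁾ᵀ. In particular rank(A) ≤ 3. -/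
open Matrix

/-- The pure common lines matrix of rotations `R⁽¹⁾,…,R⁽ⁿ⁾`: a `2n × n` matrix
(rows indexed by `Fin n × Fin 2`) whose `2×1` block at `(i,j)`, `i ≠ j`, is
`(⟨r₁⁽ⁱ⁾, r₃⁽ⁱ⁾ × r₃⁽ʲ⁾⟩, ⟨r₂⁽ⁱ⁾, r₃⁽ⁱ⁾ × r₃⁽ʲ⁾⟩)ᵀ`, and `0` on the diagonal. -/
def pureCLM {n : ℕ} (R : Fin n → Matrix (Fin 3) (Fin 3) ℝ) :
    Matrix (Fin n × Fin 2) (Fin n) ℝ :=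
  Matrix.of fun p j =>
    if p.1 = j then 0
    else (R p.1) p.2.castSucc ⬝ᵥ (crossProduct ((R p.1) 2) ((R j) 2))

/-
For a rotation the rows satisfy r₁ = r₂ × r₃ and r₂ = r₃ × r₁ (the adjugate of a rotation is its
transpose). Moving the cross product across the inner product,
⟨r₁⁽ⁱ⁾, r₃⁽ⁱ⁾ × v⟩ = ⟨r₁⁽ⁱ⁾ × r₃⁽ⁱ⁾, v⟩ = -⟨r₂⁽ⁱ⁾, v⟩ and ⟨r₂⁽ⁱ⁾, r₃⁽ⁱ⁾ × v⟩ = ⟨r₁⁽ⁱ⁾, v⟩,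
which with v = r₃⁽ʲ⁾ is the block a_{ij} of B Cᵀ; for j = i both sides vanish since
r₃⁽ⁱ⁾ × r₃⁽ⁱ⁾ = 0. The rank bound follows because B has three columns.
-/

theorem Matrix.adjugate_eq_transpose_of_mem_specialOrthogonalGroup {n R : Type*} [Fintype n]
    [DecidableEq n] [CommRing R] {A : Matrix n n R} (hA : A ∈ specialOrthogonalGroup n R) :
    adjugate A = Aᵀ := by
  obtain ⟨hAorth, hAdet⟩ := mem_specialOrthogonalGroup_iff.mp hA
  have hTA : Aᵀ * A = 1 := (mem_orthogonalGroup_iff' _ _).mp hAorth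
  calc adjugate A = Aᵀ * A * adjugate A := by rw [hTA, one_mul]
    _ = Aᵀ := by rw [Matrix.mul_assoc, mul_adjugate, hAdet, one_smul, mul_one]

theorem Matrix.cross_rows_of_mem_specialOrthogonalGroup {R : Type*} [CommRing R]
    {A : Matrix (Fin 3) (Fin 3) R} (hA : A ∈ specialOrthogonalGroup (Fin 3) R) :
    A 1 ⨯₃ A 2 = A 0 ∧ A 2 ⨯₃ A 0 = A 1 := by
  have h := adjugate_eq_transpose_of_mem_specialOrthogonalGroup hA
  constructor <;> funext k
  · have hk := congrFun₂ h k 0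
    fin_cases k <;> simp [adjugate_fin_three, cross_apply] at hk ⊢ <;> linear_combination hk
  · have hk := congrFun₂ h k 1
    fin_cases k <;> simp [adjugate_fin_three, cross_apply] at hk ⊢ <;> linear_combination hk

theorem dot_cross_eq_cross_dot {R : Type*} [CommRing R] (u v w : Fin 3 → R) :
    u ⬝ᵥ v ⨯₃ w = u ⨯₃ v ⬝ᵥ w := by
  rw [triple_product_permutation, triple_product_permutation, dotProduct_comm]

theorem pureCLM_apply_of_mem_specialOrthogonalGroup {n : ℕ}
    {R : Fin n → Matrix (Fin 3) (Fin 3) ℝ} (hR : ∀ i, R i ∈ specialOrthogonalGroup (Fin 3) ℝ)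
    (i : Fin n) (s : Fin 2) (j : Fin n) :
    pureCLM R (i, s) j = (if s = 0 then -R i 1 else R i 0) ⬝ᵥ R j 2 := by
  obtain ⟨hcross₀, hcross₁⟩ := cross_rows_of_mem_specialOrthogonalGroup (hR i)
  have hdot : R i s.castSucc ⬝ᵥ R i 2 ⨯₃ R j 2 = (if s = 0 then -R i 1 else R i 0) ⬝ᵥ R j 2 := by
    rw [dot_cross_eq_cross_dot]
    fin_cases s
    · simp [← cross_anticomm, hcross₁]
    · simp [hcross₀]
  by_cases hij : i = j
  · subst hij
    rw [← hdot, cross_self, dotProduct_zero]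
    simp [pureCLM]
  · simp [pureCLM, hij, hdot]

theorem stmt1_general {n : ℕ} (R : Fin n → Matrix (Fin 3) (Fin 3) ℝ)
    (hR : ∀ i, R i ∈ Matrix.specialOrthogonalGroup (Fin 3) ℝ) :
    pureCLM R =
      (Matrix.of fun (p : Fin n × Fin 2) (k : Fin 3) =>
        if p.2 = 0 then -((R p.1) 1 k) else (R p.1) 0 k) *
      (Matrix.of fun (i : Fin n) (k : Fin 3) => (R i) 2 k)ᵀ ∧
    (pureCLM R).rank ≤ 3 := by
  set B : Matrix (Fin n × Fin 2) (Fin 3) ℝ := Matrix.of fun p k =>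
    if p.2 = 0 then -((R p.1) 1 k) else (R p.1) 0 k
  have hfactor : pureCLM R = B * (Matrix.of fun (i : Fin n) (k : Fin 3) => (R i) 2 k)ᵀ := by
    ext ⟨i, s⟩ j
    rw [pureCLM_apply_of_mem_specialOrthogonalGroup hR, mul_apply, dotProduct]
    split_ifs with hs <;> simp [B, hs]
  refine ⟨hfactor, ?_⟩
  calc (pureCLM R).rank ≤ B.rank := hfactor ▸ rank_mul_le_left _ _
    _ ≤ 3 := by simpa using rank_le_card_width B

/-- The pure common lines matrix factors as `A = B Cᵀ`, where `B` stacks the row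
pairs `(-r₂⁽ⁱ⁾ᵀ ; r₁⁽ⁱ⁾ᵀ)` and `C` has rows `r₃⁽ⁱ⁾ᵀ`; hence `rank A ≤ 3`. -/
theorem stmt1 {n : ℕ} (hn : 3 ≤ n) (R : Fin n → Matrix (Fin 3) (Fin 3) ℝ)
    (hR : ∀ i, R i ∈ Matrix.specialOrthogonalGroup (Fin 3) ℝ) :
    pureCLM R =
      (Matrix.of fun (p : Fin n × Fin 2) (k : Fin 3) =>
        if p.2 = 0 then -((R p.1) 1 k) else (R p.1) 0 k) *
      (Matrix.of fun (i : Fin n) (k : Fin 3) => (R i) 2 k)ᵀ ∧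
    (pureCLM R).rank ≤ 3 :=
  stmt1_general R hR
end

section
/- Let J = diag(-1,-1,1). If A is the pure common lines matrix associated to R⁽¹⁾,…,R⁽ⁿ⁾ ∈ SO(3), then the pure common lines matrix associated to JR⁽¹⁾,…,JR⁽ⁿ⁾ equals −A. -/
open Matrix

/-- With `J = diag(-1,-1,1)`, the pure common lines matrix of
`JR⁽¹⁾,…,JR⁽ⁿ⁾` equals `-A`, where `A` is that of `R⁽¹⁾,…,R⁽ⁿ⁾`. -/
theorem stmt7 {n : ℕ} (R : Fin n → Matrix (Fin 3) (Fin 3) ℝ)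
    (hR : ∀ i, R i ∈ Matrix.specialOrthogonalGroup (Fin 3) ℝ) :
    pureCLM (fun i => (Matrix.diagonal ![-1, -1, 1]) * R i) = -pureCLM R := by
  ext ⟨i, k⟩ j
  simp only [pureCLM, of_apply, Matrix.neg_apply]
  by_cases h : i = j
  · simp [h]
  · simp only [h, if_neg, not_false_iff]
    fin_cases k <;>
      simp [crossProduct, dotProduct, Fin.sum_univ_succ, Matrix.diagonal_mul,
        Matrix.cons_val_zero, Matrix.cons_val_one]
end

section
/- Let R⁽¹⁾, R⁽²⁾, R⁽³⁾ ∈ SO(3) have third rows r₃⁽¹⁾, r₃⁽²⁾, r₃⁽³⁾ that are linearly independent. Then the 6×3 pure common lines matrix A associated to these three rotations has rank exactly 3. -/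
/-!
If `A v = 0`, put `w = ∑ⱼ vⱼ r₃⁽ʲ⁾`. The rows `(i, k)` of `A v = 0` say that the first two rows
of `R⁽ⁱ⁾` are orthogonal to `r₃⁽ⁱ⁾ × w`, and the third row is orthogonal to it anyway, so
`R⁽ⁱ⁾ (r₃⁽ⁱ⁾ × w) = 0` and hence `r₃⁽ⁱ⁾ × w = 0` for every `i`. As the `r₃⁽ⁱ⁾` span `ℝ³`, the
map `x ↦ x × w` vanishes, so `w = 0`, and linear independence of the `r₃⁽ⁱ⁾` gives `v = 0`.
Thus `A` has trivial kernel, i.e. full column rank.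
-/

open Matrix

theorem eq_zero_of_forall_cross_eq_zero {K : Type*} [CommRing K] {w : Fin 3 → K}
    (h : ∀ x, x ⨯₃ w = 0) : w = 0 := by
  have h0 := congrFun (h (Pi.single 0 1))
  have h1 := congrFun (h (Pi.single 1 1))
  funext k
  fin_cases k
  · simpa [cross_apply] using h1 2
  · simpa [cross_apply] using h0 2
  · simpa [cross_apply] using h0 1

theorem eq_zero_of_forall_cross_eq_zero_of_span_eq_top {K ι : Type*} [CommRing K]
    {r : ι → Fin 3 → K} (hr : Submodule.span K (Set.range r) = ⊤) {w : Fin 3 → K}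
    (h : ∀ i, r i ⨯₃ w = 0) : w = 0 := by
  have hflip : (crossProduct (R := K)).flip w = 0 := LinearMap.ext_on_range hr (by simpa using h)
  exact eq_zero_of_forall_cross_eq_zero fun x => by simpa using LinearMap.congr_fun hflip x

theorem pureCLM_mulVec_apply {n : ℕ} (R : Fin n → Matrix (Fin 3) (Fin 3) ℝ) (v : Fin n → ℝ)
    (p : Fin n × Fin 2) :
    (pureCLM R *ᵥ v) p = R p.1 p.2.castSucc ⬝ᵥ (R p.1 2 ⨯₃ ∑ j, v j • R j 2) := by
  change ∑ j, pureCLM R p j * v j = _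
  rw [map_sum (crossProduct (R p.1 2)), dotProduct_sum]
  refine Finset.sum_congr rfl fun j _ => ?_
  rw [LinearMap.map_smul, dotProduct_smul, smul_eq_mul, pureCLM, of_apply]
  split_ifs with h
  · subst h; simp
  · ring

theorem mulVec_cross_eq_zero_of_pureCLM_mulVec_eq_zero {n : ℕ}
    {R : Fin n → Matrix (Fin 3) (Fin 3) ℝ} {v : Fin n → ℝ} (hv : pureCLM R *ᵥ v = 0) (i : Fin n) :
    R i *ᵥ (R i 2 ⨯₃ ∑ j, v j • R j 2) = 0 := by
  funext k
  change R i k ⬝ᵥ _ = 0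
  fin_cases k
  · simpa [pureCLM_mulVec_apply] using congrFun hv (i, 0)
  · simpa [pureCLM_mulVec_apply] using congrFun hv (i, 1)
  · exact dot_self_cross (R i 2) _

theorem pureCLM_mulVec_injective {n : ℕ} {R : Fin n → Matrix (Fin 3) (Fin 3) ℝ}
    (hR : ∀ i, IsUnit (R i))
    (hspan : Submodule.span ℝ (Set.range fun i => R i 2) = ⊤)
    (hli : LinearIndependent ℝ fun i => R i 2) :
    Function.Injective (pureCLM R).mulVec := by
  refine (injective_iff_map_eq_zero (pureCLM R).mulVecLin).mpr fun v hv => ?_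
  have hcross (i : Fin n) : R i 2 ⨯₃ ∑ j, v j • R j 2 = 0 :=
    mulVec_injective_of_isUnit (hR i)
      (by simpa using mulVec_cross_eq_zero_of_pureCLM_mulVec_eq_zero hv i)
  exact funext <| Fintype.linearIndependent_iff.mp hli v
    (eq_zero_of_forall_cross_eq_zero_of_span_eq_top hspan hcross)

theorem rank_pureCLM {n : ℕ} {R : Fin n → Matrix (Fin 3) (Fin 3) ℝ}
    (hR : ∀ i, IsUnit (R i))
    (hspan : Submodule.span ℝ (Set.range fun i => R i 2) = ⊤)
    (hli : LinearIndependent ℝ fun i => R i 2) :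
    (pureCLM R).rank = n := by
  rw [rank_eq_finrank_span_cols,
    finrank_span_eq_card (mulVec_injective_iff.mp (pureCLM_mulVec_injective hR hspan hli))]
  simp

/-- If `R⁽¹⁾, R⁽²⁾, R⁽³⁾ ∈ SO(3)` have linearly independent third rows, then
the `6×3` pure common lines matrix of these rotations has rank exactly `3`. -/
theorem stmt17 (R : Fin 3 → Matrix (Fin 3) (Fin 3) ℝ)
    (hR : ∀ i, R i ∈ Matrix.specialOrthogonalGroup (Fin 3) ℝ)
    (hli : LinearIndependent ℝ (fun i => (R i) 2)) :
    (pureCLM R).rank = 3 :=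
  rank_pureCLM (fun i => Unitary.isUnit_coe (U := ⟨R i, (hR i).1⟩))
    (hli.span_eq_top_of_card_eq_finrank (by simp)) hli
end
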